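/- arXiv:2412.04118 — 3 statements merged into one kernel-verified Lean document; each statement's English description precedes it below -/
import Mathlib

section
/- Let G be a finite simple graph with vertices v_1, ..., v_n and edges e_1, ..., e_m, and let (X,d) be the associated dissimilarity space. Let X' ⊆ X be such that (X',d) is Robinson. Suppose v_{i_1}, v_{i_2}, ..., v_{i_k} (k ≥ 3) is a cycle in G, with edges e_{a_j} = {v_{i_j}, v_{i_{j+1}}} for 1 ≤ j < k and e_{a_k} = {v_{i_k}, v_{i_1}}, and suppose X'_{i_j} = X' ∩ {x_{i_j}^t : 1 ≤ t ≤ m+1} is nonempty for every 1 ≤ j ≤ k. Then {y_{a_1}, y_{a_2}, ..., y_{a_k}} is not a subset of X'. -/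
/-- The point set `X = {xᵢᵏ : 1 ≤ i ≤ n, 1 ≤ k ≤ m+1} ∪ {yⱼ : 1 ≤ j ≤ m}` of the
dissimilarity space associated to a graph on `n` vertices with `m` edges. -/
abbrev XT (n m : ℕ) := (Fin n × Fin (m + 1)) ⊕ Fin m

open Classical in
/-- The dissimilarity associated to a graph with vertex set `Fin n` whose edges are
enumerated by `ev : Fin m → Sym2 (Fin n)`:
`d(xᵢᵏ, xᵢᵏ') = 1`; `d(yⱼ, xᵢᵏ) = d(xᵢᵏ, yⱼ) = 1` when `vᵢ` is an endpoint of `eⱼ`;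
`d(z,z) = 0`; and `d = 2` on all other pairs. -/
noncomputable def dH {n m : ℕ} (ev : Fin m → Sym2 (Fin n)) : XT n m → XT n m → ℝ :=
  fun a b =>
    if a = b then 0
    else
      match a, b with
      | Sum.inl (i, _), Sum.inl (i', _) => if i = i' then 1 else 2
      | Sum.inl (i, _), Sum.inr j => if i ∈ ev j then 1 else 2
      | Sum.inr j, Sum.inl (i, _) => if i ∈ ev j then 1 else 2
      | Sum.inr _, Sum.inr _ => 2

/-- `(X', d)` is Robinson: there is a strict total (i.e. linear) order on `X'` such
that `d p_i p_k ≥ max (d p_i p_j) (d p_j p_k)` whenever `p_i < p_j < p_k`. -/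
def IsRobinsonOn {X : Type*} (d : X → X → ℝ) (X' : Set X) : Prop :=
  ∃ r : X' → X' → Prop, IsStrictTotalOrder X' r ∧
    ∀ a b c : X', r a b → r b c →
      max (d (a : X) (b : X)) (d (b : X) (c : X)) ≤ d (a : X) (c : X)

/-- `X'ᵢ = X' ∩ {xᵢᵏ : 1 ≤ k ≤ m+1}`. -/
def colSet {n m : ℕ} (X' : Set (XT n m)) (i : Fin n) : Set (XT n m) :=
  {w | w ∈ X' ∧ ∃ k, w = Sum.inl (i, k)}

lemma dH_inl_inr {n m : ℕ} (ev : Fin m → Sym2 (Fin n)) (i : Fin n) (κ : Fin (m+1))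
    (j : Fin m) (h : i ∈ ev j) : dH ev (Sum.inl (i, κ)) (Sum.inr j) = 1 := by
  simp [dH, h]

lemma dH_inr_inl {n m : ℕ} (ev : Fin m → Sym2 (Fin n)) (i : Fin n) (κ : Fin (m+1))
    (j : Fin m) (h : i ∈ ev j) : dH ev (Sum.inr j) (Sum.inl (i, κ)) = 1 := by
  simp [dH, h]

lemma dH_inr_inr {n m : ℕ} (ev : Fin m → Sym2 (Fin n)) (j j' : Fin m) (h : j ≠ j') :
    dH ev (Sum.inr j) (Sum.inr j') = 2 := by
  simp [dH, h]

lemma dH_inl_inl {n m : ℕ} (ev : Fin m → Sym2 (Fin n)) (i i' : Fin n) (κ κ' : Fin (m+1))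
    (h : i ≠ i') : dH ev (Sum.inl (i, κ)) (Sum.inl (i', κ')) = 2 := by
  simp [dH, h]

lemma addmod_ne (k t j : ℕ) (ht : t < k) (hj1 : 0 < j) (hj2 : j < k) : (t + j) % k ≠ t := by
  rcases lt_or_ge (t + j) k with h | h
  · rw [Nat.mod_eq_of_lt h]; omega
  · rw [Nat.mod_eq_sub_mod h, Nat.mod_eq_of_lt (by omega)]; omega


/-- if `(X', d)` is Robinson, `v_{i 0}, …, v_{i (k-1)}` (`k ≥ 3`) is a
cycle in `G` with edges `e_{a t} = {v_{i t}, v_{i ((t+1) % k)}}`, and every `X'_{i t}`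
is nonempty, then `{y_{a 0}, …, y_{a (k-1)}} ⊄ X'`. -/
theorem stmt15 {n m : ℕ} (G : SimpleGraph (Fin n)) (ev : Fin m → Sym2 (Fin n))
    (hev1 : ∀ j, ev j ∈ G.edgeSet) (hev2 : Function.Injective ev)
    (hev3 : ∀ s ∈ G.edgeSet, ∃ j, ev j = s)
    (X' : Set (XT n m)) (hrob : IsRobinsonOn (dH ev) X')
    (k : ℕ) (hk : 3 ≤ k)
    (vi : ℕ → Fin n) (hinj : ∀ s < k, ∀ t < k, vi s = vi t → s = t)
    (ed : ℕ → Fin m)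
    (hcyc : ∀ t < k, ev (ed t) = s(vi t, vi ((t + 1) % k)))
    (hne : ∀ t < k, (colSet X' (vi t)).Nonempty) :
    ¬ ∀ t < k, Sum.inr (ed t) ∈ X' := by
  classical
  intro hY
  obtain ⟨r, hsto, hrel⟩ := hrob
  haveI := hsto
  letI : LinearOrder X' := linearOrderOfSTO r
  have hkpos : 0 < k := by omega
  haveI : Nonempty (Fin k) := ⟨⟨0, hkpos⟩⟩
  -- ed is injective on [0, k)
  have hedinj : ∀ s < k, ∀ t < k, ed s = ed t → s = t := by
    intro s hs t ht h
    have h2 := congrArg ev h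
    rw [hcyc s hs, hcyc t ht, Sym2.eq_iff] at h2
    rcases h2 with ⟨h3, h4⟩ | ⟨h3, h4⟩
    · exact hinj s hs t ht h3
    · have e1 : s = (t + 1) % k := hinj s hs _ (Nat.mod_lt _ hkpos) h3
      have e2 : (s + 1) % k = t := hinj _ (Nat.mod_lt _ hkpos) t ht h4
      rw [e1, Nat.mod_add_mod] at e2
      exact absurd e2 (addmod_ne k t 2 ht (by omega) (by omega))
  -- representatives in each column
  choose rep hrep using fun t : Fin k => hne t t.isLt
  have hrepX : ∀ t : Fin k, rep t ∈ X' := fun t => (hrep t).1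
  have hrepx : ∀ t : Fin k, ∃ κ, rep t = Sum.inl (vi ↑t, κ) := fun t => (hrep t).2
  set F : Fin k → X' := fun t => ⟨rep t, hrepX t⟩ with hF
  set Gg : Fin k → X' := fun t => ⟨Sum.inr (ed ↑t), hY ↑t t.isLt⟩ with hG
  set S : Finset X' := Finset.univ.image F ∪ Finset.univ.image Gg with hSdef
  have hFS : ∀ t, F t ∈ S := fun t => Finset.mem_union_left _ (Finset.mem_image_of_mem _ (Finset.mem_univ t))
  have hGS : ∀ t, Gg t ∈ S := fun t => Finset.mem_union_right _ (Finset.mem_image_of_mem _ (Finset.mem_univ t))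
  have hS : S.Nonempty := ⟨F ⟨0, hkpos⟩, hFS _⟩
  set p : X' := S.min' hS with hpdef
  have hple : ∀ q ∈ S, p = q ∨ r p q := fun q hq => S.min'_le q hq
  have hpmem : p ∈ S := S.min'_mem hS
  -- the core contradiction: p has two neighbors u w at distance 1, with d u w = 2
  have core : ∀ u w : X', p ≠ u → p ≠ w → u ∈ S → w ∈ S →
      dH ev (p : XT n m) (u : XT n m) = 1 → dH ev (p : XT n m) (w : XT n m) = 1 →
      dH ev (u : XT n m) (w : XT n m) = 2 → dH ev (w : XT n m) (u : XT n m) = 2 →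
      u ≠ w → False := by
    intro u w hpu hpw huS hwS d1 d2 d3 d4 huw
    have rpu : r p u := (hple u huS).resolve_left hpu
    have rpw : r p w := (hple w hwS).resolve_left hpw
    rcases trichotomous_of r u w with h | h | h
    · have := hrel p u w rpu h
      rw [d1, d3, d2] at this
      have : (2:ℝ) ≤ 1 := le_trans (le_max_right _ _) this
      linarith
    · exact huw h
    · have := hrel p w u rpw h
      rw [d2, d4, d1] at this
      have : (2:ℝ) ≤ 1 := le_trans (le_max_right _ _) this
      linarith
  -- p is either some F t or some Gg t
  rw [hSdef, Finset.mem_union, Finset.mem_image, Finset.mem_image] at hpmem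
  rcases hpmem with ⟨t, _, hFt⟩ | ⟨t, _, hGt⟩
  · -- p is an x-point of column vi t; neighbors are y_{ed t} and y_{ed (t-1)}
    obtain ⟨κ, hκ⟩ := hrepx t
    have hpv : (p : XT n m) = Sum.inl (vi ↑t, κ) := by rw [← hFt]; exact hκ
    have htprev : (↑t : ℕ) = 0 ∨ 0 < (↑t : ℕ) := by omega
    set s : ℕ := if (↑t : ℕ) = 0 then k - 1 else ↑t - 1 with hs
    have hsk : s < k := by rw [hs]; split <;> omega
    have hs1 : (s + 1) % k = ↑t := by
      rw [hs]; split
      · rename_i h0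
        have : k - 1 + 1 = k := by omega
        rw [this, Nat.mod_self, h0]
      · have : ↑t - 1 + 1 = (↑t : ℕ) := by omega
        rw [this, Nat.mod_eq_of_lt t.isLt]
    have hst : s ≠ ↑t := by rw [hs]; split <;> omega
    have hedst : ed s ≠ ed ↑t := fun h => hst (hedinj s hsk ↑t t.isLt h)
    have hmem1 : vi ↑t ∈ ev (ed ↑t) := by
      rw [hcyc ↑t t.isLt]; exact Sym2.mem_mk_left _ _
    have hmem2 : vi ↑t ∈ ev (ed s) := by
      rw [hcyc s hsk, hs1]; exact Sym2.mem_mk_right _ _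
    refine core (Gg t) (Gg ⟨s, hsk⟩) ?_ ?_ (hGS _) (hGS _) ?_ ?_ ?_ ?_ ?_
    · intro h; have := congrArg Subtype.val h; rw [hpv] at this; simp [hG] at this
    · intro h; have := congrArg Subtype.val h; rw [hpv] at this; simp [hG] at this
    · rw [hpv]; exact dH_inl_inr ev _ κ _ hmem1
    · rw [hpv]; exact dH_inl_inr ev _ κ _ hmem2
    · exact dH_inr_inr ev _ _ (fun h => hedst h.symm)
    · exact dH_inr_inr ev _ _ hedst
    · intro h; have := congrArg Subtype.val h; simp [hG] at this; exact hedst this.symm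
  · -- p is y_{ed t}; neighbors are x-points of columns vi t and vi ((t+1)%k)
    have hpv : (p : XT n m) = Sum.inr (ed ↑t) := by rw [← hGt]
    set s : ℕ := (↑t + 1) % k with hs
    have hsk : s < k := Nat.mod_lt _ hkpos
    have hst : s ≠ ↑t := addmod_ne k ↑t 1 t.isLt (by omega) (by omega)
    have hvist : vi s ≠ vi ↑t := fun h => hst (hinj s hsk ↑t t.isLt h)
    obtain ⟨κ₁, hκ₁⟩ := hrepx t
    obtain ⟨κ₂, hκ₂⟩ := hrepx ⟨s, hsk⟩
    have hmem1 : vi ↑t ∈ ev (ed ↑t) := by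
      rw [hcyc ↑t t.isLt]; exact Sym2.mem_mk_left _ _
    have hmem2 : vi s ∈ ev (ed ↑t) := by
      rw [hcyc ↑t t.isLt]; exact Sym2.mem_mk_right _ _
    refine core (F t) (F ⟨s, hsk⟩) ?_ ?_ (hFS _) (hFS _) ?_ ?_ ?_ ?_ ?_
    · intro h; have := congrArg Subtype.val h
      rw [hpv] at this; simp only [hF] at this; rw [hκ₁] at this; simp at this
    · intro h; have := congrArg Subtype.val h
      rw [hpv] at this; simp only [hF] at this; rw [hκ₂] at this; simp at this
    · rw [hpv]; show dH ev _ (rep t) = 1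
      rw [hκ₁]; exact dH_inr_inl ev _ κ₁ _ hmem1
    · rw [hpv]; show dH ev _ (rep ⟨s, hsk⟩) = 1
      rw [hκ₂]; exact dH_inr_inl ev _ κ₂ _ hmem2
    · show dH ev (rep t) (rep ⟨s, hsk⟩) = 2
      rw [hκ₁, hκ₂]; exact dH_inl_inl ev _ _ _ _ (fun h => hvist h.symm)
    · show dH ev (rep ⟨s, hsk⟩) (rep t) = 2
      rw [hκ₁, hκ₂]; exact dH_inl_inl ev _ _ _ _ hvist
    · intro h; have := congrArg Subtype.val h
      simp only [hF] at this; rw [hκ₁, hκ₂] at this; simp at this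
      exact hvist this.1.symm
end

section
/- Let (X,d) be a dissimilarity space with |X| = n and let 1 ≤ κ ≤ n. Consider the path P on vertices v_1, ..., v_n (edges {v_i, v_{i+1}} for 1 ≤ i < n), with the orientation O given by: v_i → v_{i+1} for every 1 ≤ i < κ, and, for κ ≤ i < n, the edge {v_i, v_{i+1}} is oriented v_{i+1} → v_i if i − κ is even and v_i → v_{i+1} if i − κ is odd. Then there exists a bijection B : X → {v_1, ..., v_n} such that O is compatible for the transported dissimilarity (i.e., for every directed path B(p_1) → B(p_2) → ... → B(p_k) in (P,O) and all 1 ≤ a < b < c ≤ k, d(p_a,p_c) ≥ max{d(p_a,p_b), d(p_b,p_c)}) if and only if there exists a subset X' ⊆ X with |X'| = κ such that (X',d) admits a compatible order (i.e., is one-way-Robinson). -/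
/-- The edge `{v_i, v_{i+1}}` (for `1 ≤ i < n`) is oriented forwards
(`v_i → v_{i+1}`) iff `i < κ`, or `i ≥ κ` and `i - κ` is odd. -/
def fwdEdge (κ i : ℕ) : Prop := i < κ ∨ (i - κ) % 2 = 1

/-- The arcs of the oriented path `v_1 → ⋯ → v_κ ← v_{κ+1} → v_{κ+2} ← ⋯` on the
vertices `1, …, n`. -/
def pathDir (n κ : ℕ) (a b : ℕ) : Prop :=
  (b = a + 1 ∧ 1 ≤ a ∧ b ≤ n ∧ fwdEdge κ a) ∨
  (a = b + 1 ∧ 1 ≤ b ∧ a ≤ n ∧ ¬ fwdEdge κ b)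

/-- A sink of the oriented path. -/
def IsSinkV (n κ q : ℕ) : Prop := ∀ r, ¬ pathDir n κ q r

lemma reach_of_sink {n κ q c : ℕ} (h : IsSinkV n κ q)
    (hr : Relation.ReflTransGen (pathDir n κ) q c) : c = q := by
  rcases hr.cases_head with h' | ⟨w, hw, _⟩
  · exact h'.symm
  · exact absurd hw (h w)

lemma reach_char {n κ p q : ℕ} (h : Relation.ReflTransGen (pathDir n κ) p q) :
    p = q ∨ (p < q ∧ q ≤ κ) ∨ (κ < p ∧ IsSinkV n κ q) := by
  induction h with
  | refl => exact Or.inl rfl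
  | @tail b c hb harc ih =>
    have sink_even : ∀ m, κ ≤ m → (m - κ) % 2 = 0 → 1 ≤ m → IsSinkV n κ m := by
      intro m hm hme hm1 r hr
      rcases hr with ⟨h1, h2, h3, h4⟩ | ⟨h1, h2, h3, h4⟩
      · rcases h4 with h4 | h4 <;> omega
      · apply h4
        unfold fwdEdge
        omega
    rcases ih with heq | ⟨hpb, hbκ⟩ | ⟨hκp, hsink⟩
    · -- p = b, single arc
      rcases harc with ⟨h1, h2, h3, h4⟩ | ⟨h1, h2, h3, h4⟩
      · rcases h4 with h4 | h4
        · exact Or.inr (Or.inl (by omega))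
        · by_cases hbk : b < κ
          · exact Or.inr (Or.inl (by omega))
          · refine Or.inr (Or.inr ⟨by omega, sink_even c (by omega) (by omega) (by omega)⟩)
      · have h4' : ¬ (c < κ) ∧ (c - κ) % 2 ≠ 1 := by
          constructor <;> intro h <;> exact h4 (by unfold fwdEdge; omega)
        refine Or.inr (Or.inr ⟨by omega, sink_even c (by omega) (by omega) (by omega)⟩)
    · -- p < b ≤ κ
      rcases harc with ⟨h1, h2, h3, h4⟩ | ⟨h1, h2, h3, h4⟩
      · rcases h4 with h4 | h4
        · exact Or.inr (Or.inl (by omega))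
        · omega
      · exact absurd (by unfold fwdEdge; omega : fwdEdge κ c) h4
    · exact absurd harc (hsink c)

lemma reach_of_le {n κ : ℕ} (hκn : κ ≤ n) :
    ∀ q p : ℕ, 1 ≤ p → p ≤ q → q ≤ κ → Relation.ReflTransGen (pathDir n κ) p q := by
  intro q
  induction q with
  | zero => intro p h1 h2 h3; omega
  | succ q ih =>
    intro p h1 h2 h3
    rcases Nat.eq_or_lt_of_le h2 with rfl | hlt
    · exact Relation.ReflTransGen.refl
    · refine Relation.ReflTransGen.tail (ih p h1 (by omega) (by omega)) ?_
      exact Or.inl ⟨rfl, by omega, by omega, Or.inl (by omega)⟩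

/-- there is a bijection `B : X → {v_1, …, v_n}` making the orientation
`v_1 → ⋯ → v_κ ← v_{κ+1} → v_{κ+2} ← ⋯` compatible for the transported dissimilarity
iff `X` has a subset `X'` of size `κ` such that `(X', d)` is one-way-Robinson. -/
theorem stmt16 {X : Type*} [Fintype X] (d : X → X → ℝ)
    (h0 : ∀ x, d x x = 0) (hnn : ∀ x y, 0 ≤ d x y)
    (n κ : ℕ) (hn : Fintype.card X = n) (hκ1 : 1 ≤ κ) (hκn : κ ≤ n) :
    (∃ B : X ≃ Fin n, ∀ x y z : X,
        Relation.ReflTransGen (pathDir n κ) ((B x : ℕ) + 1) ((B y : ℕ) + 1) →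
        Relation.ReflTransGen (pathDir n κ) ((B y : ℕ) + 1) ((B z : ℕ) + 1) →
        max (d x y) (d y z) ≤ d x z) ↔
      (∃ X' : Set X, X'.ncard = κ ∧ IsRobinsonOn d X') := by
  classical
  constructor
  · rintro ⟨B, hB⟩
    refine ⟨{x | (B x : ℕ) < κ}, ?_, ?_⟩
    · have e : Fin κ ≃ {x : X // (B x : ℕ) < κ} :=
        { toFun := fun j => ⟨B.symm ⟨j, lt_of_lt_of_le j.2 hκn⟩, by simp⟩
          invFun := fun x => ⟨(B x.1 : ℕ), x.2⟩
          left_inv := fun j => by simp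
          right_inv := fun x => by simp }
      rw [Set.ncard_eq_toFinset_card', Set.toFinset_card]
      exact (Fintype.card_congr e.symm).trans (Fintype.card_fin κ)
    · refine ⟨fun a b => B a < B b, ?_, ?_⟩
      · haveI i1 : IsTrichotomous {x : X | (B x : ℕ) < κ}
            (fun a b => B (a : X) < B (b : X)) := by
          refine ⟨fun a b => ?_⟩
          rcases lt_trichotomy (B (a : X)) (B (b : X)) with h | h | h
          · exact fun h1 _ => absurd h h1
          · exact fun _ _ => Subtype.ext (B.injective h)
          · exact fun _ h2 => absurd h h2
        haveI i2 : IsIrrefl {x : X | (B x : ℕ) < κ}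
            (fun a b => B (a : X) < B (b : X)) := ⟨fun a => lt_irrefl _⟩
        haveI i3 : IsTrans {x : X | (B x : ℕ) < κ}
            (fun a b => B (a : X) < B (b : X)) := ⟨fun a b c => lt_trans⟩
        haveI i4 : IsStrictOrder {x : X | (B x : ℕ) < κ}
            (fun a b => B (a : X) < B (b : X)) := IsStrictOrder.mk
        exact IsStrictTotalOrder.mk
      · intro a b c hab hbc
        have hb2 : ((B (b : X)) : ℕ) < κ := b.2
        have hc2 : ((B (c : X)) : ℕ) < κ := c.2
        have hab' : ((B (a : X)) : ℕ) < ((B (b : X)) : ℕ) := Fin.lt_def.mp hab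
        have hbc' : ((B (b : X)) : ℕ) < ((B (c : X)) : ℕ) := Fin.lt_def.mp hbc
        apply hB
        · exact reach_of_le hκn _ _ (by omega) (by omega) (by omega)
        · exact reach_of_le hκn _ _ (by omega) (by omega) (by omega)
  · rintro ⟨X', hcard, r, hsto, hrob⟩
    haveI : IsStrictTotalOrder X' r := hsto
    haveI : DecidableRel r := Classical.decRel r
    letI : LinearOrder X' := linearOrderOfSTO r
    have hcard' : Fintype.card X' = κ := by
      rw [← Set.toFinset_card, ← Set.ncard_eq_toFinset_card']; exact hcard
    have hcardc : Fintype.card (↥X'ᶜ) = n - κ := by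
      rw [Fintype.card_compl_set, hn, hcard']
    let e1 : Fin κ ≃o X' := monoEquivOfFin X' hcard'
    let e2 : ↥X'ᶜ ≃ Fin (n - κ) := Fintype.equivFinOfCardEq hcardc
    have hsum : κ + (n - κ) = n := by omega
    let B : X ≃ Fin n :=
      ((Equiv.sumCompl (· ∈ X')).symm.trans
        ((Equiv.sumCongr e1.symm.toEquiv e2).trans (finSumFinEquiv.trans (finCongr hsum))))
    have hBpos : ∀ (x : X) (hx : x ∈ X'), (B x : ℕ) = (e1.symm ⟨x, hx⟩ : ℕ) := by
      intro x hx
      simp only [B, Equiv.trans_apply, Equiv.sumCompl_symm_apply_of_pos hx,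
        Equiv.sumCongr_apply, Sum.map_inl, finSumFinEquiv_apply_left, finCongr_apply]
      rfl
    have hBneg : ∀ (x : X) (hx : x ∉ X'), (B x : ℕ) = κ + (e2 ⟨x, hx⟩ : ℕ) := by
      intro x hx
      simp only [B, Equiv.trans_apply, Equiv.sumCompl_symm_apply_of_neg hx,
        Equiv.sumCongr_apply, Sum.map_inr, finSumFinEquiv_apply_right, finCongr_apply]
      rfl
    have hmem : ∀ x : X, (B x : ℕ) < κ ↔ x ∈ X' := by
      intro x
      by_cases hx : x ∈ X'
      · simp [hx, hBpos x hx, (e1.symm ⟨x, hx⟩).2]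
      · simp [hx, hBneg x hx]
    refine ⟨B, ?_⟩
    intro x y z hxy hyz
    by_cases hxy' : x = y
    · subst hxy'
      simpa [h0] using hnn x z
    by_cases hyz' : y = z
    · subst hyz'
      simp [h0, hnn]
    have hBxy : (B x : ℕ) + 1 ≠ (B y : ℕ) + 1 := by
      intro h; exact hxy' (B.injective (Fin.ext (by omega)))
    have hByz : (B y : ℕ) + 1 ≠ (B z : ℕ) + 1 := by
      intro h; exact hyz' (B.injective (Fin.ext (by omega)))
    rcases reach_char hxy with h | ⟨h1, h2⟩ | ⟨h1, hsink⟩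
    · exact absurd h hBxy
    · rcases reach_char hyz with h' | ⟨h1', h2'⟩ | ⟨h1', hsink'⟩
      · exact absurd h' hByz
      · -- positions: B x + 1 < B y + 1 < B z + 1 ≤ κ
        have hxm : x ∈ X' := (hmem x).1 (by omega)
        have hym : y ∈ X' := (hmem y).1 (by omega)
        have hzm : z ∈ X' := (hmem z).1 (by omega)
        have hr1 : r ⟨x, hxm⟩ ⟨y, hym⟩ := by
          have : e1.symm ⟨x, hxm⟩ < e1.symm ⟨y, hym⟩ := by
            rw [Fin.lt_def]; rw [hBpos x hxm, hBpos y hym] at h1; omega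
          exact e1.symm.lt_iff_lt.1 this
        have hr2 : r ⟨y, hym⟩ ⟨z, hzm⟩ := by
          have : e1.symm ⟨y, hym⟩ < e1.symm ⟨z, hzm⟩ := by
            rw [Fin.lt_def]; rw [hBpos y hym, hBpos z hzm] at h1'; omega
          exact e1.symm.lt_iff_lt.1 this
        exact hrob ⟨x, hxm⟩ ⟨y, hym⟩ ⟨z, hzm⟩ hr1 hr2
      · omega
    · exact absurd (reach_of_sink hsink hyz) (Ne.symm hByz)
end

section
/- Let P be the path on vertices x_1, ..., x_n (n ≥ 3, edges {x_i, x_{i+1}} for 1 ≤ i < n) and let O be an orientation of P that is neither the monotone orientation x_1 → x_2 → ... → x_n nor its reverse. Then there exists an index k with 1 < k < n such that both edges incident to x_k are oriented out of x_k, or both are oriented into x_k; moreover, for any such k, no pair of vertices x_a, x_b with a < k < b satisfies x_a ↔ x_b in O, and ξ(O) = ξ(O_L) + ξ(O_R), where O_L and O_R denote the restrictions of O to the subpaths on x_1, ..., x_k and on x_k, ..., x_n respectively. -/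
/-- An orientation of the path on vertices `1, …, n` is given by `o : ℕ → Bool`:
for `1 ≤ i < n`, the edge `{x_i, x_{i+1}}` is oriented `x_i → x_{i+1}` iff
`o i = true`. `pdir n o a b` holds iff there is an arc from `a` to `b`. -/
def pdir (n : ℕ) (o : ℕ → Bool) (a b : ℕ) : Prop :=
  (b = a + 1 ∧ 1 ≤ a ∧ b ≤ n ∧ o a = true) ∨
  (a = b + 1 ∧ 1 ≤ b ∧ a ≤ n ∧ o b = false)

/-- `x ↔ y`: there is a directed path from `x` to `y` or from `y` to `x`. -/
def pconn (n : ℕ) (o : ℕ → Bool) (a b : ℕ) : Prop :=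
  Relation.ReflTransGen (pdir n o) a b ∨ Relation.ReflTransGen (pdir n o) b a

/-- `ξ` of the restriction of the oriented path to the vertices `lo, lo+1, …, hi`:
the number of unordered pairs of distinct vertices in that range joined by a
directed path. -/
noncomputable def xiP (n : ℕ) (o : ℕ → Bool) (lo hi : ℕ) : ℕ :=
  Set.ncard {p : ℕ × ℕ | lo ≤ p.1 ∧ p.1 < p.2 ∧ p.2 ≤ hi ∧ pconn n o p.1 p.2}

lemma walk_lt (n k : ℕ) (o : ℕ → Bool) (hnoin : ∀ x, ¬ pdir n o x k)
    {a b : ℕ} (h : Relation.ReflTransGen (pdir n o) a b) (ha : a < k) : b < k := by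
  induction h with
  | refl => exact ha
  | tail h1 h2 ih =>
    rename_i c d
    have hd : d ≠ k := fun hdk => hnoin c (hdk ▸ h2)
    rcases h2 with ⟨h, _⟩ | ⟨h, _⟩ <;> omega

lemma walk_gt (n k : ℕ) (o : ℕ → Bool) (hnoin : ∀ x, ¬ pdir n o x k)
    {a b : ℕ} (h : Relation.ReflTransGen (pdir n o) a b) (ha : k < a) : k < b := by
  induction h with
  | refl => exact ha
  | tail h1 h2 ih =>
    rename_i c d
    have hd : d ≠ k := fun hdk => hnoin c (hdk ▸ h2)
    rcases h2 with ⟨h, _⟩ | ⟨h, _⟩ <;> omega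

lemma walk_le (n k : ℕ) (o : ℕ → Bool) (hnoout : ∀ y, ¬ pdir n o k y)
    {a b : ℕ} (h : Relation.ReflTransGen (pdir n o) a b) (ha : a ≤ k) : b ≤ k := by
  induction h with
  | refl => exact ha
  | tail h1 h2 ih =>
    rename_i c d
    have hc : c ≠ k := fun hck => hnoout d (hck ▸ h2)
    rcases h2 with ⟨h, _⟩ | ⟨h, _⟩ <;> omega

lemma walk_ge (n k : ℕ) (o : ℕ → Bool) (hnoout : ∀ y, ¬ pdir n o k y)
    {a b : ℕ} (h : Relation.ReflTransGen (pdir n o) a b) (ha : k ≤ a) : k ≤ b := by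
  induction h with
  | refl => exact ha
  | tail h1 h2 ih =>
    rename_i c d
    have hc : c ≠ k := fun hck => hnoout d (hck ▸ h2)
    rcases h2 with ⟨h, _⟩ | ⟨h, _⟩ <;> omega

lemma nocross (n k : ℕ) (o : ℕ → Bool) (hk1 : 1 < k) (hne : o (k - 1) ≠ o k) :
    ∀ a b : ℕ, a < k → k < b → ¬ pconn n o a b := by
  intro a b hak hkb hc
  cases hok : o k with
  | true =>
    -- then o (k-1) = false : k is a source, no arc into k
    have hok1 : o (k - 1) = false := by
      cases h' : o (k - 1) with
      | false => rfl
      | true => exact absurd (h'.trans hok.symm) hne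
    have hnoin : ∀ x, ¬ pdir n o x k := by
      intro x hx
      rcases hx with ⟨h1, _, _, h4⟩ | ⟨h1, _, _, h4⟩
      · have : x = k - 1 := by omega
        rw [this, hok1] at h4; simp at h4
      · rw [hok] at h4; simp at h4
    rcases hc with h | h
    · exact absurd (walk_lt n k o hnoin h hak) (by omega)
    · exact absurd (walk_gt n k o hnoin h hkb) (by omega)
  | false =>
    -- then o (k-1) = true : k is a sink, no arc out of k
    have hok1 : o (k - 1) = true := by
      cases h' : o (k - 1) with
      | true => rfl
      | false => exact absurd (h'.trans hok.symm) hne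
    have hnoout : ∀ y, ¬ pdir n o k y := by
      intro y hy
      rcases hy with ⟨h1, _, _, h4⟩ | ⟨h1, _, _, h4⟩
      · rw [hok] at h4; simp at h4
      · have : y = k - 1 := by omega
        rw [this, hok1] at h4; simp at h4
    rcases hc with h | h
    · exact absurd (walk_le n k o hnoout h (by omega)) (by omega)
    · exact absurd (walk_ge n k o hnoout h (by omega)) (by omega)

lemma xiP_finite (n : ℕ) (o : ℕ → Bool) (lo hi : ℕ) :
    {p : ℕ × ℕ | lo ≤ p.1 ∧ p.1 < p.2 ∧ p.2 ≤ hi ∧ pconn n o p.1 p.2}.Finite := by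
  apply Set.Finite.subset ((Set.finite_Iic hi).prod (Set.finite_Iic hi))
  rintro ⟨x, y⟩ ⟨_, h2, h3, _⟩
  exact ⟨by simp; omega, by simpa using h3⟩

/-- a non-monotone orientation `O` of the path `x_1, …, x_n` (`n ≥ 3`)
has an inner vertex `x_k` whose two incident edges both point out of, or both into,
`x_k` (i.e. `o (k-1) ≠ o k`); for any such `k`, no pair `x_a, x_b` with `a < k < b`
satisfies `x_a ↔ x_b`, and `ξ(O) = ξ(O_L) + ξ(O_R)` where `O_L`, `O_R` are the
restrictions of `O` to `x_1, …, x_k` and `x_k, …, x_n`. -/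
theorem stmt17 (n : ℕ) (hn : 3 ≤ n) (o : ℕ → Bool)
    (hnotmono : ¬ ∀ i, 1 ≤ i → i < n → o i = true)
    (hnotrev : ¬ ∀ i, 1 ≤ i → i < n → o i = false) :
    (∃ k, 1 < k ∧ k < n ∧ o (k - 1) ≠ o k) ∧
    ∀ k, 1 < k → k < n → o (k - 1) ≠ o k →
      (∀ a b, 1 ≤ a → a < k → k < b → b ≤ n → ¬ pconn n o a b) ∧
      xiP n o 1 n = xiP n o 1 k + xiP n o k n := by
  constructor
  · by_contra h
    push_neg at h
    have hconst : ∀ i, 1 ≤ i → i < n → o i = o 1 := by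
      intro i
      induction i with
      | zero => omega
      | succ m ih =>
        intro h1 h2
        by_cases hm : m = 0
        · subst hm; rfl
        · have heq := h (m + 1) (by omega) h2
          simp only [Nat.add_sub_cancel] at heq
          rw [← heq]
          exact ih (by omega) (by omega)
    cases h1 : o 1 with
    | true => exact hnotmono (fun i hi1 hin => (hconst i hi1 hin).trans h1)
    | false => exact hnotrev (fun i hi1 hin => (hconst i hi1 hin).trans h1)
  · intro k hk1 hkn hne
    refine ⟨fun a b _ hak hkb _ => nocross n k o hk1 hne a b hak hkb, ?_⟩
    have hS : {p : ℕ × ℕ | 1 ≤ p.1 ∧ p.1 < p.2 ∧ p.2 ≤ n ∧ pconn n o p.1 p.2} =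
        {p : ℕ × ℕ | 1 ≤ p.1 ∧ p.1 < p.2 ∧ p.2 ≤ k ∧ pconn n o p.1 p.2} ∪
        {p : ℕ × ℕ | k ≤ p.1 ∧ p.1 < p.2 ∧ p.2 ≤ n ∧ pconn n o p.1 p.2} := by
      ext ⟨a, b⟩
      simp only [Set.mem_setOf_eq, Set.mem_union]
      constructor
      · rintro ⟨h1, h2, h3, h4⟩
        by_cases hb : b ≤ k
        · exact Or.inl ⟨h1, h2, hb, h4⟩
        · by_cases ha : k ≤ a
          · exact Or.inr ⟨ha, h2, h3, h4⟩
          · exact absurd h4 (nocross n k o hk1 hne a b (by omega) (by omega))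
      · rintro (⟨h1, h2, h3, h4⟩ | ⟨h1, h2, h3, h4⟩)
        · exact ⟨h1, h2, by omega, h4⟩
        · exact ⟨by omega, h2, h3, h4⟩
    have hdisj : Disjoint
        {p : ℕ × ℕ | 1 ≤ p.1 ∧ p.1 < p.2 ∧ p.2 ≤ k ∧ pconn n o p.1 p.2}
        {p : ℕ × ℕ | k ≤ p.1 ∧ p.1 < p.2 ∧ p.2 ≤ n ∧ pconn n o p.1 p.2} := by
      rw [Set.disjoint_left]
      rintro ⟨a, b⟩ ⟨_, h2, h3, _⟩ ⟨h1', h2', _, _⟩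
      omega
    show Set.ncard _ = Set.ncard _ + Set.ncard _
    rw [hS, Set.ncard_union_eq hdisj (xiP_finite n o 1 k) (xiP_finite n o k n)]
end
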